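/- arXiv:0810.5507 — 2 statements merged into one kernel-verified Lean document; each statement's English description precedes it below -/
import Mathlib

section
/- Fix a real s ≥ 0, an integer N ≥ 1, a point θ ∈ ℝ² and a C² function f : ℝ² → ℝ. Then the sum over k ∈ Z̃² with 0 < |k| ≤ N of the iterated directional derivatives of f along the basis fields satisfies ∑_{k ∈ Z̃², 0<|k|≤N} [ (A^s_k·∇(A^s_k·∇f))(θ) + (B^s_k·∇(B^s_k·∇f))(θ) ] = c_N · Δf(θ), where c_N = ∑_{k ∈ Z̃², 0<|k|≤N} k₁²/|k|^{2(s+1)} and Δf = ∂²f/∂θ₁² + ∂²f/∂θ₂². (This is the truncated version of the theorem identifying the generator of the stochastic flow with (c_N/2)Δ on cylindrical functionals F(g)(θ) = f(g(θ)).) -/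
open Real

/-- Euclidean norm of a lattice point `k ∈ ℤ²`. -/
noncomputable def nZ (k : ℤ × ℤ) : ℝ := Real.sqrt ((k.1 : ℝ) ^ 2 + (k.2 : ℝ) ^ 2)

/-- `k · θ`. -/
noncomputable def dotZ (k : ℤ × ℤ) (θ : ℝ × ℝ) : ℝ := (k.1 : ℝ) * θ.1 + (k.2 : ℝ) * θ.2

/-- The vector field `A^s_k(θ) = |k|^{-(s+1)} cos(k·θ)·(k₂, -k₁)` (zero for `k = 0`). -/
noncomputable def vfA (s : ℝ) (k : ℤ × ℤ) (θ : ℝ × ℝ) : ℝ × ℝ :=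
  ((nZ k) ^ (-(s + 1)) * Real.cos (dotZ k θ)) • ((k.2 : ℝ), -(k.1 : ℝ))

/-- The vector field `B^s_k(θ) = |k|^{-(s+1)} sin(k·θ)·(k₂, -k₁)` (zero for `k = 0`). -/
noncomputable def vfB (s : ℝ) (k : ℤ × ℤ) (θ : ℝ × ℝ) : ℝ × ℝ :=
  ((nZ k) ^ (-(s + 1)) * Real.sin (dotZ k θ)) • ((k.2 : ℝ), -(k.1 : ℝ))

/-- `[k,l] = k₁ l₂ - k₂ l₁`. -/
noncomputable def crossZ (k l : ℤ × ℤ) : ℝ := (k.1 : ℝ) * (l.2 : ℝ) - (k.2 : ℝ) * (l.1 : ℝ)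

/-- The half-lattice `Z̃² = {k ∈ ℤ² : k₁ > 0, or k₁ = 0 and k₂ > 0}`. -/
def halfL (k : ℤ × ℤ) : Prop := 0 < k.1 ∨ (k.1 = 0 ∧ 0 < k.2)

open scoped Classical in
/-- The finite set `{k ∈ Z̃² : 0 < |k| ≤ N}`. -/
noncomputable def ballH (N : ℕ) : Finset (ℤ × ℤ) :=
  (Finset.Icc (-(N : ℤ), -(N : ℤ)) ((N : ℤ), (N : ℤ))).filter
    (fun k => halfL k ∧ 0 < nZ k ∧ nZ k ≤ (N : ℝ))

/-- Directional derivative of a scalar function along a vector field: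
`(X·∇h)(θ) := Dh(θ)(X(θ))`. -/
noncomputable def advS (X : ℝ × ℝ → ℝ × ℝ) (h : ℝ × ℝ → ℝ) (θ : ℝ × ℝ) : ℝ :=
  fderiv ℝ h θ (X θ)


/-!
Each of `A^s_k`, `B^s_k` is a scalar multiple of the constant vector `k^⊥ = (k₂, -k₁)`, and the
scalar depends on `θ` only through `k·θ`, so it is constant along `k^⊥`. Hence
`X·∇(X·∇f) = φ² D²f(k^⊥, k^⊥)` for `X = φ k^⊥`, and `cos² + sin² = 1` turns the contribution of
mode `k` into `|k|^{-2(s+1)} D²f(k^⊥, k^⊥) = |k|^{-2(s+1)} (k₂² f₁₁ - k₁k₂ (f₁₂ + f₂₁) + k₁² f₂₂)`.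
Over `Z̃²` the cross weights cancel under `(k₁, k₂) ↦ (k₁, -k₂)` and the `k₂²`-weights equal the
`k₁²`-weights under `(k₁, k₂) ↦ (k₂, k₁)`; these symmetries only preserve `Z̃²` up to `k ↦ -k`,
under which all weights are even.
-/

open Finset

noncomputable def dotZCLM (k : ℤ × ℤ) : (ℝ × ℝ) →L[ℝ] ℝ :=
  (k.1 : ℝ) • ContinuousLinearMap.fst ℝ ℝ ℝ + (k.2 : ℝ) • ContinuousLinearMap.snd ℝ ℝ ℝ

lemma dotZCLM_apply (k : ℤ × ℤ) (θ : ℝ × ℝ) : dotZCLM k θ = dotZ k θ := by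
  simp [dotZCLM, dotZ]

lemma nZ_nonneg (k : ℤ × ℤ) : 0 ≤ nZ k := Real.sqrt_nonneg _

lemma dotZ_perp (k : ℤ × ℤ) : dotZ k ((k.2 : ℝ), -(k.1 : ℝ)) = 0 := by
  simp only [dotZ]; ring

lemma fderiv_fderiv_apply {f : ℝ × ℝ → ℝ} {θ : ℝ × ℝ}
    (hf : DifferentiableAt ℝ (fderiv ℝ f) θ) (w z : ℝ × ℝ) :
    fderiv ℝ (fun x => fderiv ℝ f x w) θ z = fderiv ℝ (fderiv ℝ f) θ z w := by
  simp [fderiv_clm_apply hf (differentiableAt_const w)]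

lemma advS_advS_smul_const {φ f : ℝ × ℝ → ℝ} {θ v : ℝ × ℝ}
    (hφ : DifferentiableAt ℝ φ θ) (hφv : fderiv ℝ φ θ v = 0)
    (hf : DifferentiableAt ℝ (fderiv ℝ f) θ) :
    advS (fun x => φ x • v) (advS (fun x => φ x • v) f) θ
      = φ θ ^ 2 * fderiv ℝ (fderiv ℝ f) θ v v := by
  have hfv : DifferentiableAt ℝ (fun x => fderiv ℝ f x v) θ :=
    hf.clm_apply (differentiableAt_const v)
  have h : advS (fun x => φ x • v) f = fun x => φ x * fderiv ℝ f x v := by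
    funext x; simp [advS]
  rw [advS, h, fderiv_fun_mul hφ hfv]
  simp only [map_smul, add_apply, smul_apply, fderiv_fderiv_apply hf, smul_eq_mul, hφv, mul_zero,
    add_zero]
  ring

lemma hasFDerivAt_dotZ (k : ℤ × ℤ) (θ : ℝ × ℝ) : HasFDerivAt (dotZ k) (dotZCLM k) θ := by
  convert (dotZCLM k).hasFDerivAt using 1
  funext x
  exact (dotZCLM_apply k x).symm

lemma fderiv_mul_comp_dotZ_perp {g : ℝ → ℝ} (hg : Differentiable ℝ g) (c : ℝ)
    (k : ℤ × ℤ) (θ : ℝ × ℝ) :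
    fderiv ℝ (fun x => c * g (dotZ k x)) θ ((k.2 : ℝ), -(k.1 : ℝ)) = 0 := by
  have h : HasFDerivAt (fun x => c * g (dotZ k x)) _ θ :=
    ((hg _).hasDerivAt.comp_hasFDerivAt θ (hasFDerivAt_dotZ k θ)).const_mul c
  rw [h.fderiv]
  simp [dotZCLM_apply, dotZ_perp]

lemma advS_vfA_add_advS_vfB (s : ℝ) (k : ℤ × ℤ) {f : ℝ × ℝ → ℝ} {θ : ℝ × ℝ}
    (hf : DifferentiableAt ℝ (fderiv ℝ f) θ) :
    advS (vfA s k) (advS (vfA s k) f) θ + advS (vfB s k) (advS (vfB s k) f) θ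
      = fderiv ℝ (fderiv ℝ f) θ ((k.2 : ℝ), -(k.1 : ℝ)) ((k.2 : ℝ), -(k.1 : ℝ))
          / nZ k ^ (2 * (s + 1)) := by
  set r := nZ k ^ (-(s + 1)) with hr
  set v : ℝ × ℝ := ((k.2 : ℝ), -(k.1 : ℝ))
  have hmode : ∀ g : ℝ → ℝ, Differentiable ℝ g →
      advS (fun x => (r * g (dotZ k x)) • v) (advS (fun x => (r * g (dotZ k x)) • v) f) θ
        = (r * g (dotZ k θ)) ^ 2 * fderiv ℝ (fderiv ℝ f) θ v v := fun g hg =>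
    advS_advS_smul_const
      (((hg _).comp θ (hasFDerivAt_dotZ k θ).differentiableAt).const_mul r)
      (fderiv_mul_comp_dotZ_perp hg r k θ) hf
  have hr2 : r ^ 2 = (nZ k ^ (2 * (s + 1)))⁻¹ := by
    rw [hr, Real.rpow_neg (nZ_nonneg k), inv_pow, ← Real.rpow_natCast,
      ← Real.rpow_mul (nZ_nonneg k)]
    ring_nf
  rw [show vfA s k = fun x => (r * cos (dotZ k x)) • v from rfl,
    show vfB s k = fun x => (r * sin (dotZ k x)) • v from rfl,
    hmode _ Real.differentiable_cos, hmode _ Real.differentiable_sin, div_eq_mul_inv, ← hr2]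
  linear_combination r ^ 2 * fderiv ℝ (fderiv ℝ f) θ v v * Real.cos_sq_add_sin_sq (dotZ k θ)

lemma hessian_apply_perp (B : (ℝ × ℝ) →L[ℝ] (ℝ × ℝ) →L[ℝ] ℝ) (a b : ℝ) :
    B (b, -a) (b, -a) = b ^ 2 * B (1, 0) (1, 0) - a * b * (B (1, 0) (0, 1) + B (0, 1) (1, 0))
      + a ^ 2 * B (0, 1) (0, 1) := by
  have hv : ((b, -a) : ℝ × ℝ) = b • ((1 : ℝ), (0 : ℝ)) + (-a) • ((0 : ℝ), (1 : ℝ)) := by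
    simp
  rw [hv]
  simp only [map_add, map_smul, add_apply, smul_apply, smul_eq_mul]
  ring

instance : DecidablePred halfL := fun k =>
  inferInstanceAs (Decidable (0 < k.1 ∨ (k.1 = 0 ∧ 0 < k.2)))

def toHalf (k : ℤ × ℤ) : ℤ × ℤ := if halfL k then k else -k

lemma halfL.ne_zero {k : ℤ × ℤ} (hk : halfL k) : k ≠ 0 := by
  rintro rfl; simp [halfL] at hk

lemma halfL_or_halfL_neg {k : ℤ × ℤ} (hk : k ≠ 0) : halfL k ∨ halfL (-k) := by
  simp only [halfL, Prod.fst_neg, Prod.snd_neg]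
  have : k.1 ≠ 0 ∨ k.2 ≠ 0 := by
    by_contra! h; exact hk (Prod.ext h.1 h.2)
  omega

lemma halfL.not_neg {k : ℤ × ℤ} (hk : halfL k) : ¬ halfL (-k) := by
  simp only [halfL, Prod.fst_neg, Prod.snd_neg] at hk ⊢
  omega

lemma toHalf_eq_or (k : ℤ × ℤ) : toHalf k = k ∨ toHalf k = -k := by
  unfold toHalf; split_ifs <;> simp

lemma halfL_toHalf {k : ℤ × ℤ} (hk : k ≠ 0) : halfL (toHalf k) := by
  unfold toHalf; split_ifs with h
  · exact h
  · exact (halfL_or_halfL_neg hk).resolve_left h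

lemma toHalf_of_halfL {k : ℤ × ℤ} (hk : halfL k) : toHalf k = k := if_pos hk

lemma toHalf_neg_of_halfL {k : ℤ × ℤ} (hk : halfL k) : toHalf (-k) = k := by
  simp [toHalf, hk.not_neg]

lemma nZ_neg (k : ℤ × ℤ) : nZ (-k) = nZ k := by
  simp [nZ]

lemma nZ_conj (k : ℤ × ℤ) : nZ (k.1, -k.2) = nZ k := by
  simp [nZ]

lemma nZ_swap (k : ℤ × ℤ) : nZ k.swap = nZ k := by
  simp [nZ, add_comm]

lemma nZ_toHalf (k : ℤ × ℤ) : nZ (toHalf k) = nZ k := by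
  rcases toHalf_eq_or k with h | h <;> simp [h, nZ_neg]

lemma nZ_pos_iff {k : ℤ × ℤ} : 0 < nZ k ↔ k ≠ 0 := by
  rw [nZ, Real.sqrt_pos, Ne, Prod.ext_iff]
  constructor
  · rintro h ⟨h1, h2⟩
    simp [h1, h2] at h
  · intro h
    by_cases h1 : k.1 = 0
    · have h2 : (k.2 : ℝ) ≠ 0 := by exact_mod_cast fun h2 => h ⟨h1, h2⟩
      positivity
    · have h1' : (k.1 : ℝ) ≠ 0 := by exact_mod_cast h1
      positivity

lemma abs_fst_le_nZ (k : ℤ × ℤ) : |(k.1 : ℝ)| ≤ nZ k :=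
  Real.abs_le_sqrt (le_add_of_nonneg_right (sq_nonneg _))

lemma abs_snd_le_nZ (k : ℤ × ℤ) : |(k.2 : ℝ)| ≤ nZ k :=
  Real.abs_le_sqrt (le_add_of_nonneg_left (sq_nonneg _))

lemma mem_ballH {N : ℕ} {k : ℤ × ℤ} : k ∈ ballH N ↔ halfL k ∧ nZ k ≤ N := by
  simp only [ballH, mem_filter, mem_Icc, Prod.le_def]
  constructor
  · rintro ⟨-, hk, -, hN⟩
    exact ⟨hk, hN⟩
  · rintro ⟨hk, hN⟩
    have h1 := abs_le.mp ((abs_fst_le_nZ k).trans hN)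
    have h2 := abs_le.mp ((abs_snd_le_nZ k).trans hN)
    exact ⟨⟨⟨by exact_mod_cast h1.1, by exact_mod_cast h2.1⟩, by exact_mod_cast h1.2,
      by exact_mod_cast h2.2⟩, hk, nZ_pos_iff.mpr hk.ne_zero, hN⟩

lemma sum_ballH_comp_involutive {σ : ℤ × ℤ → ℤ × ℤ} (hσ : Function.Involutive σ)
    (hσneg : ∀ k, σ (-k) = -σ k) (hσnZ : ∀ k, nZ (σ k) = nZ k)
    {g : ℤ × ℤ → ℝ} (hg : ∀ k, g (-k) = g k) (N : ℕ) :
    ∑ k ∈ ballH N, g (σ k) = ∑ k ∈ ballH N, g k := by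
  have hmaps : ∀ k ∈ ballH N, toHalf (σ k) ∈ ballH N := by
    intro k hk
    rw [mem_ballH] at hk ⊢
    have hσk : σ k ≠ 0 := nZ_pos_iff.mp (by rw [hσnZ]; exact nZ_pos_iff.mpr hk.1.ne_zero)
    exact ⟨halfL_toHalf hσk, by rw [nZ_toHalf, hσnZ]; exact hk.2⟩
  have hinv : ∀ k ∈ ballH N, toHalf (σ (toHalf (σ k))) = k := by
    intro k hk
    have hk := (mem_ballH.mp hk).1
    rcases toHalf_eq_or (σ k) with h | h <;> rw [h]
    · rw [hσ, toHalf_of_halfL hk]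
    · rw [hσneg, hσ, toHalf_neg_of_halfL hk]
  refine sum_nbij' (fun k => toHalf (σ k)) (fun k => toHalf (σ k)) hmaps hmaps hinv hinv ?_
  intro k _
  rcases toHalf_eq_or (σ k) with h | h <;> simp [h, hg]

lemma sum_ballH_fst_mul_snd_div (p : ℝ) (N : ℕ) :
    ∑ k ∈ ballH N, (k.1 : ℝ) * k.2 / nZ k ^ p = 0 := by
  have h := sum_ballH_comp_involutive (σ := fun k => (k.1, -k.2))
    (fun k => by simp) (fun k => by simp) nZ_conj
    (g := fun k => (k.1 : ℝ) * k.2 / nZ k ^ p) (fun k => by simp [nZ_neg]) N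
  simp only [Int.cast_neg, mul_neg, nZ_conj, neg_div, sum_neg_distrib] at h
  linarith

lemma sum_ballH_snd_sq_div (p : ℝ) (N : ℕ) :
    ∑ k ∈ ballH N, (k.2 : ℝ) ^ 2 / nZ k ^ p = ∑ k ∈ ballH N, (k.1 : ℝ) ^ 2 / nZ k ^ p := by
  have h := sum_ballH_comp_involutive (σ := Prod.swap) Prod.swap_swap (fun k => rfl)
    nZ_swap (g := fun k => (k.2 : ℝ) ^ 2 / nZ k ^ p)
    (fun k => by simp [nZ_neg]) N
  simpa [nZ_swap] using h.symm

theorem generator_is_laplacian_general (s : ℝ) (N : ℕ)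
    (θ : ℝ × ℝ) (f : ℝ × ℝ → ℝ) (hf : ContDiff ℝ 2 f) :
    ∑ k ∈ ballH N,
        (advS (vfA s k) (advS (vfA s k) f) θ + advS (vfB s k) (advS (vfB s k) f) θ)
      = (∑ k ∈ ballH N, (k.1 : ℝ) ^ 2 / (nZ k) ^ (2 * (s + 1))) *
          (fderiv ℝ (fun x => fderiv ℝ f x (1, 0)) θ (1, 0)
            + fderiv ℝ (fun x => fderiv ℝ f x (0, 1)) θ (0, 1)) := by
  have hf' : DifferentiableAt ℝ (fderiv ℝ f) θ :=
    (hf.fderiv_right (m := 1) le_rfl).differentiable one_ne_zero θ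
  set D2 := fderiv ℝ (fderiv ℝ f) θ
  set p := 2 * (s + 1)
  have hmode : ∀ k : ℤ × ℤ,
      advS (vfA s k) (advS (vfA s k) f) θ + advS (vfB s k) (advS (vfB s k) f) θ
        = (k.2 : ℝ) ^ 2 / nZ k ^ p * D2 (1, 0) (1, 0)
          - (k.1 : ℝ) * k.2 / nZ k ^ p * (D2 (1, 0) (0, 1) + D2 (0, 1) (1, 0))
          + (k.1 : ℝ) ^ 2 / nZ k ^ p * D2 (0, 1) (0, 1) := by
    intro k
    rw [advS_vfA_add_advS_vfB s k hf', hessian_apply_perp]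
    ring
  simp only [hmode, sum_add_distrib, sum_sub_distrib, ← sum_mul, sum_ballH_fst_mul_snd_div,
    sum_ballH_snd_sq_div, fderiv_fderiv_apply hf']
  ring

theorem generator_is_laplacian (s : ℝ) (hs : 0 ≤ s) (N : ℕ) (hN : 1 ≤ N)
    (θ : ℝ × ℝ) (f : ℝ × ℝ → ℝ) (hf : ContDiff ℝ 2 f) :
    ∑ k ∈ ballH N,
        (advS (vfA s k) (advS (vfA s k) f) θ + advS (vfB s k) (advS (vfB s k) f) θ)
      = (∑ k ∈ ballH N, (k.1 : ℝ) ^ 2 / (nZ k) ^ (2 * (s + 1))) *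
          (fderiv ℝ (fun x => fderiv ℝ f x (1, 0)) θ (1, 0)
            + fderiv ℝ (fun x => fderiv ℝ f x (0, 1)) θ (0, 1)) :=
  generator_is_laplacian_general s N θ f hf
end

section
/- Fix a real s ≥ 0 and k, m ∈ ℤ² \ {0}. Then the following diagonal cancellations from the proof of the stochastic geodesics theorem hold as identities of vector fields on ℝ²: (a) if k + m ≠ 0 then −([k,m]·|k+m|^{s+1}/(2|k|^{s+1}|m|^{s+1}))·( [A^s_k, A^s_{k+m}] + [B^s_k, B^s_{k+m}] ) = −([k,m]²/(2|k|^{2(s+1)}))·B^s_m; (b) if k − m ≠ 0 then ([k,m]·|k−m|^{s+1}/(2|k|^{s+1}|m|^{s+1}))·( [A^s_k, A^s_{k−m}] + [B^s_k, B^s_{k−m}] ) = −([k,m]²/(2|k|^{2(s+1)}))·B^s_m. (The prefactors are the A^s_{k±m}-coefficient of [A^s_k, B^s_m] and the B^s_{k±m}-coefficient of [B^s_k, B^s_m]; the off-diagonal B^s_{2k±m} contributions cancel.) -/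
open Real

/-- Lie bracket of C¹ vector fields on `ℝ²`: `[X,Y](θ) = DY(θ)(X(θ)) - DX(θ)(Y(θ))`. -/
noncomputable def lieB (X Y : ℝ × ℝ → ℝ × ℝ) (θ : ℝ × ℝ) : ℝ × ℝ :=
  fderiv ℝ Y θ (X θ) - fderiv ℝ X θ (Y θ)


noncomputable def dotL (k : ℤ × ℤ) : (ℝ × ℝ) →L[ℝ] ℝ :=
  (k.1:ℝ) • (ContinuousLinearMap.fst ℝ ℝ ℝ) + (k.2:ℝ) • (ContinuousLinearMap.snd ℝ ℝ ℝ)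

lemma dotL_apply (k : ℤ × ℤ) (w : ℝ × ℝ) : dotL k w = dotZ k w := by
  simp [dotL, dotZ]

lemma hasFDerivAt_dotZ_s18 (k : ℤ × ℤ) (θ : ℝ × ℝ) :
    HasFDerivAt (fun w => dotZ k w) (dotL k) θ := by
  have h : (fun w : ℝ × ℝ => dotZ k w) = fun w => dotL k w := by
    funext w; rw [dotL_apply]
  rw [h]
  exact (dotL k).hasFDerivAt

lemma fderiv_vfA_apply (s : ℝ) (k : ℤ × ℤ) (θ w : ℝ × ℝ) :
    fderiv ℝ (vfA s k) θ w
      = ((nZ k) ^ (-(s+1)) * (-Real.sin (dotZ k θ) * dotZ k w)) • (((k.2:ℝ), -(k.1:ℝ)) : ℝ × ℝ) := by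
  have h : HasFDerivAt (vfA s k)
      (((((nZ k) ^ (-(s+1))) • ((-Real.sin (dotZ k θ)) • dotL k)).smulRight
        (((k.2:ℝ), -(k.1:ℝ)) : ℝ × ℝ))) θ :=
    (((hasFDerivAt_dotZ_s18 k θ).cos).const_mul _).smul_const _
  rw [h.fderiv]
  simp [dotL_apply, mul_assoc]

lemma fderiv_vfB_apply (s : ℝ) (k : ℤ × ℤ) (θ w : ℝ × ℝ) :
    fderiv ℝ (vfB s k) θ w
      = ((nZ k) ^ (-(s+1)) * (Real.cos (dotZ k θ) * dotZ k w)) • (((k.2:ℝ), -(k.1:ℝ)) : ℝ × ℝ) := by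
  have h : HasFDerivAt (vfB s k)
      (((((nZ k) ^ (-(s+1))) • ((Real.cos (dotZ k θ)) • dotL k)).smulRight
        (((k.2:ℝ), -(k.1:ℝ)) : ℝ × ℝ))) θ :=
    (((hasFDerivAt_dotZ_s18 k θ).sin).const_mul _).smul_const _
  rw [h.fderiv]
  simp [dotL_apply, mul_assoc]

lemma dotZ_smul (k : ℤ × ℤ) (a : ℝ) (w : ℝ × ℝ) : dotZ k (a • w) = a * dotZ k w := by
  simp [dotZ]; ring

lemma nZ_pos {k : ℤ × ℤ} (hk : k ≠ 0) : 0 < nZ k := by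
  have h : ¬(k.1 = 0 ∧ k.2 = 0) := by
    simpa [Prod.ext_iff] using hk
  have h2 : (0:ℝ) < (k.1:ℝ)^2 + (k.2:ℝ)^2 := by
    rcases not_and_or.mp h with h1 | h1
    · have h3 : (0:ℝ) < (k.1:ℝ)^2 := sq_pos_of_ne_zero (Int.cast_ne_zero.mpr h1)
      nlinarith [sq_nonneg ((k.2:ℝ))]
    · have h3 : (0:ℝ) < (k.2:ℝ)^2 := sq_pos_of_ne_zero (Int.cast_ne_zero.mpr h1)
      nlinarith [sq_nonneg ((k.1:ℝ))]
  exact Real.sqrt_pos.mpr h2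

theorem diagonal_cancellation (s : ℝ) (hs : 0 ≤ s) (k m : ℤ × ℤ)
    (hk : k ≠ 0) (hm : m ≠ 0) :
    (k + m ≠ 0 → ∀ θ : ℝ × ℝ,
      (-(crossZ k m * (nZ (k + m)) ^ (s + 1) / (2 * (nZ k) ^ (s + 1) * (nZ m) ^ (s + 1)))) •
          (lieB (vfA s k) (vfA s (k + m)) θ + lieB (vfB s k) (vfB s (k + m)) θ)
        = (-((crossZ k m) ^ 2 / (2 * (nZ k) ^ (2 * (s + 1))))) • vfB s m θ) ∧
    (k - m ≠ 0 → ∀ θ : ℝ × ℝ,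
      (crossZ k m * (nZ (k - m)) ^ (s + 1) / (2 * (nZ k) ^ (s + 1) * (nZ m) ^ (s + 1))) •
          (lieB (vfA s k) (vfA s (k - m)) θ + lieB (vfB s k) (vfB s (k - m)) θ)
        = (-((crossZ k m) ^ 2 / (2 * (nZ k) ^ (2 * (s + 1))))) • vfB s m θ) := by
  have hk0 := nZ_pos hk
  have hm0 := nZ_pos hm
  have e1 : nZ k ^ (-(s+1)) = (nZ k ^ (s+1))⁻¹ := Real.rpow_neg hk0.le _
  have e2 : nZ m ^ (-(s+1)) = (nZ m ^ (s+1))⁻¹ := Real.rpow_neg hm0.le _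
  have e4 : nZ k ^ (2*(s+1)) = (nZ k ^ (s+1))^2 := by
    rw [two_mul, Real.rpow_add hk0, sq]
  have hA : (0:ℝ) < nZ k ^ (s+1) := Real.rpow_pos_of_pos hk0 _
  have hB : (0:ℝ) < nZ m ^ (s+1) := Real.rpow_pos_of_pos hm0 _
  constructor
  · intro hl θ
    have hl0 := nZ_pos hl
    have e3 : nZ (k+m) ^ (-(s+1)) = (nZ (k+m) ^ (s+1))⁻¹ := Real.rpow_neg hl0.le _
    have hC : (0:ℝ) < nZ (k+m) ^ (s+1) := Real.rpow_pos_of_pos hl0 _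
    have hml : dotZ m θ = dotZ (k+m) θ - dotZ k θ := by
      simp only [dotZ, Prod.fst_add, Prod.snd_add]; push_cast; ring
    simp only [lieB, fderiv_vfA_apply, fderiv_vfB_apply, vfA, vfB, dotZ_smul,
      e1, e2, e3, e4, hml, Real.sin_sub]
    simp only [crossZ, dotZ, Prod.fst_add, Prod.snd_add, smul_add, Prod.smul_mk,
      Prod.mk_sub_mk, Prod.mk_add_mk, Prod.mk.injEq, smul_eq_mul]
    push_cast
    constructor <;> (field_simp; ring)
  · intro hl θ
    have hl0 := nZ_pos hl
    have e3 : nZ (k-m) ^ (-(s+1)) = (nZ (k-m) ^ (s+1))⁻¹ := Real.rpow_neg hl0.le _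
    have hC : (0:ℝ) < nZ (k-m) ^ (s+1) := Real.rpow_pos_of_pos hl0 _
    have hml : dotZ m θ = dotZ k θ - dotZ (k-m) θ := by
      simp only [dotZ, Prod.fst_sub, Prod.snd_sub]; push_cast; ring
    simp only [lieB, fderiv_vfA_apply, fderiv_vfB_apply, vfA, vfB, dotZ_smul,
      e1, e2, e3, e4, hml, Real.sin_sub]
    simp only [crossZ, dotZ, Prod.fst_sub, Prod.snd_sub, smul_add, Prod.smul_mk,
      Prod.mk_sub_mk, Prod.mk_add_mk, Prod.mk.injEq, smul_eq_mul]
    push_cast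
    constructor <;> (field_simp; ring)
end
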